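/- arXiv:math/0401305 — 6 statements merged into one kernel-verified Lean document; each statement's English description precedes it below -/
import Mathlib

section
/- Let Ω be an infinite set, G a subgroup of Sym(Ω), and Γ ⊆ Ω a subset such that |Ω|^{|Γ|} ≤ |Ω| (for example, any finite subset Γ). Then G_(Γ) ≈_{|Ω|⁺} G, where |Ω|⁺ denotes the successor cardinal of |Ω|. -/
open scoped Cardinal ENNReal

universe u

variable {Ω : Type u}

/-- The pointwise stabilizer of a set `s` inside a subgroup `G` of `Sym(Ω)`. -/
def pstab (G : Subgroup (Equiv.Perm Ω)) (s : Set Ω) : Subgroup (Equiv.Perm Ω) where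
  carrier := {g | g ∈ G ∧ ∀ x ∈ s, g x = x}
  one_mem' := ⟨G.one_mem, fun _ _ => rfl⟩
  mul_mem' := by
    rintro a b ⟨haG, ha⟩ ⟨hbG, hb⟩
    refine ⟨G.mul_mem haG hbG, fun x hx => ?_⟩
    simp [Equiv.Perm.mul_apply, hb x hx, ha x hx]
  inv_mem' := by
    rintro a ⟨haG, ha⟩
    refine ⟨G.inv_mem haG, fun x hx => ?_⟩
    conv_lhs => rw [← ha x hx]
    exact Equiv.symm_apply_apply a x

/-- For a family `A` of subsets of `Ω`, the subgroup of permutations carrying each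
member of `A` onto itself. -/
def SAgrp (A : Set (Set Ω)) : Subgroup (Equiv.Perm Ω) where
  carrier := {f | ∀ s ∈ A, (f : Ω → Ω) '' s = s}
  one_mem' := fun s _ => by simp
  mul_mem' := by
    intro a b ha hb s hs
    rw [Equiv.Perm.coe_mul, Set.image_comp, hb s hs, ha s hs]
  inv_mem' := by
    intro a ha s hs
    conv_lhs => rw [← ha s hs]
    rw [← Set.image_comp]
    simp

/-- `G₁ ≼_κ G₂` : there is a set `U` of permutations of cardinality `< κ` with
`G₁ ≤ ⟨G₂ ∪ U⟩`. -/
def Prec (κ : Cardinal.{u}) (G₁ G₂ : Subgroup (Equiv.Perm Ω)) : Prop :=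
  ∃ U : Set (Equiv.Perm Ω), #U < κ ∧
    G₁ ≤ Subgroup.closure ((G₂ : Set (Equiv.Perm Ω)) ∪ U)

/-- `G₁ ≈_κ G₂`. -/
def CApprox (κ : Cardinal.{u}) (G₁ G₂ : Subgroup (Equiv.Perm Ω)) : Prop :=
  Prec κ G₁ G₂ ∧ Prec κ G₂ G₁

/-- `G₁ ≼ G₂` (i.e. `≼_{ℵ₀}`, with `U` finite). -/
def PrecF (G₁ G₂ : Subgroup (Equiv.Perm Ω)) : Prop :=
  ∃ U : Set (Equiv.Perm Ω), U.Finite ∧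
    G₁ ≤ Subgroup.closure ((G₂ : Set (Equiv.Perm Ω)) ∪ U)

/-- `G₁ ≈ G₂` (i.e. `≈_{ℵ₀}`). -/
def ApproxF (G₁ G₂ : Subgroup (Equiv.Perm Ω)) : Prop :=
  PrecF G₁ G₂ ∧ PrecF G₂ G₁

/-- A generalized metric: a `[0,∞]`-valued metric. -/
structure IsGenMetric (d : Ω → Ω → ℝ≥0∞) : Prop where
  eq_zero_iff : ∀ α β, d α β = 0 ↔ α = β
  symm : ∀ α β, d α β = d β α
  triangle : ∀ α β γ, d α γ ≤ d α β + d β γ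

/-- Open ball for a generalized metric. -/
def gball (d : Ω → Ω → ℝ≥0∞) (α : Ω) (r : ℝ≥0∞) : Set Ω := {β | d α β < r}

/-- `(Ω, d)` is `κ`-uncrowded: every ball of finite radius has `< κ` elements. -/
def Uncrowded (κ : Cardinal.{u}) (d : Ω → Ω → ℝ≥0∞) : Prop :=
  ∀ (α : Ω) (r : ℝ≥0∞), r < ⊤ → #(gball d α r) < κ

/-- `(Ω, d)` is uniformly `κ`-uncrowded. -/
def UnifUncrowded (κ : Cardinal.{u}) (d : Ω → Ω → ℝ≥0∞) : Prop :=
  ∀ r : ℝ≥0∞, r < ⊤ → ∃ lam : Cardinal.{u}, lam < κ ∧ ∀ α : Ω, #(gball d α r) ≤ lam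

/-- `g` is bounded with respect to `d` : `‖g‖_d = ⨆ α, d α (αg) < ∞`. -/
def BoundedPerm (d : Ω → Ω → ℝ≥0∞) (g : Equiv.Perm Ω) : Prop :=
  (⨆ α : Ω, d α (g α)) < ⊤

/-- The function topology on `Sym(Ω)`: induced from the product topology on `Ω → Ω`
with `Ω` discrete. -/
def permTop (Ω : Type u) : TopologicalSpace (Equiv.Perm Ω) :=
  TopologicalSpace.induced (fun g : Equiv.Perm Ω => (g : Ω → Ω))
    (@Pi.topologicalSpace Ω (fun _ => Ω) (fun _ => ⊥))

/-- `G` is closed in `Sym(Ω)` in the function topology. -/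
def FTClosed (G : Subgroup (Equiv.Perm Ω)) : Prop :=
  @IsClosed _ (permTop Ω) (G : Set (Equiv.Perm Ω))

/-- `G` is discrete in the function topology. -/
def FTDiscrete (G : Subgroup (Equiv.Perm Ω)) : Prop :=
  @DiscreteTopology G
    (TopologicalSpace.induced (fun x : G => (x : Equiv.Perm Ω)) (permTop Ω))

/-- The orbit of `α` under a subgroup `H ≤ Sym(Ω)`. -/
def orb (H : Subgroup (Equiv.Perm Ω)) (α : Ω) : Set Ω := {β | ∃ g ∈ H, g α = β}

/-- A partition of `Ω`: a set of disjoint nonempty subsets with union `Ω`. -/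
def IsPartition (A : Set (Set Ω)) : Prop :=
  (∀ s ∈ A, s.Nonempty) ∧ A.PairwiseDisjoint id ∧ ⋃₀ A = Set.univ

/-- `A ∈ 𝒫`: a partition of `Ω` into finite subsets of unbounded cardinality. -/
def MemP (A : Set (Set Ω)) : Prop :=
  IsPartition A ∧ (∀ s ∈ A, s.Finite) ∧ ∀ n : ℕ, ∃ s ∈ A, (n : ℕ∞) < s.encard

/-- `A ∈ 𝒬`: a partition of `Ω` with a common finite bound on the cardinalities of
its members, infinitely many of which have more than one element. -/
def MemQ (A : Set (Set Ω)) : Prop :=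
  IsPartition A ∧ (∃ n : ℕ, ∀ s ∈ A, s.encard ≤ (n : ℕ∞)) ∧
    {s | s ∈ A ∧ 1 < s.encard}.Infinite

/-- The subgroup `FN(Ω,d)` of permutations of finite norm with respect to a
generalized metric `d`. -/
def FN (d : Ω → Ω → ℝ≥0∞) (hd : IsGenMetric d) : Subgroup (Equiv.Perm Ω) where
  carrier := {g | (⨆ α : Ω, d α (g α)) < ⊤}
  one_mem' := by
    have h : (⨆ α : Ω, d α ((1 : Equiv.Perm Ω) α)) ≤ 0 :=
      iSup_le fun α => le_of_eq ((hd.eq_zero_iff α ((1 : Equiv.Perm Ω) α)).2 rfl)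
    exact lt_of_le_of_lt h (by simp)
  mul_mem' := by
    intro a b ha hb
    have h : (⨆ α : Ω, d α ((a * b) α)) ≤
        (⨆ α : Ω, d α (b α)) + (⨆ α : Ω, d α (a α)) := by
      refine iSup_le fun α => ?_
      calc d α ((a * b) α) = d α (a (b α)) := by rw [Equiv.Perm.mul_apply]
        _ ≤ d α (b α) + d (b α) (a (b α)) := hd.triangle _ _ _
        _ ≤ _ := add_le_add (le_iSup (fun α : Ω => d α (b α)) α)
              (le_iSup (fun β : Ω => d β (a β)) (b α))
    exact lt_of_le_of_lt h (ENNReal.add_lt_top.2 ⟨hb, ha⟩)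
  inv_mem' := by
    intro a ha
    have h : (⨆ α : Ω, d α (a⁻¹ α)) ≤ ⨆ β : Ω, d β (a β) := by
      refine iSup_le fun α => ?_
      have e : d α (a⁻¹ α) = d (a⁻¹ α) (a (a⁻¹ α)) := by
        rw [show a (a⁻¹ α) = α from Equiv.apply_symm_apply a α]; exact hd.symm _ _
      rw [e]
      exact le_iSup (fun β : Ω => d β (a β)) (a⁻¹ α)
    exact lt_of_le_of_lt h ha

theorem pstab_le (G : Subgroup (Equiv.Perm Ω)) (s : Set Ω) : pstab G s ≤ G :=
  fun _ hg => hg.1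

theorem inv_mul_mem_pstab_iff {G : Subgroup (Equiv.Perm Ω)} {s : Set Ω} {g₁ g₂ : Equiv.Perm Ω}
    (h₁ : g₁ ∈ G) (h₂ : g₂ ∈ G) : g₁⁻¹ * g₂ ∈ pstab G s ↔ ∀ x ∈ s, g₁ x = g₂ x := by
  simp only [pstab, Subgroup.mem_mk, Submonoid.mem_mk, Subsemigroup.mem_mk, Set.mem_ofPred_eq,
    G.mul_mem (G.inv_mem h₁) h₂, true_and, Equiv.Perm.mul_apply, Equiv.Perm.inv_eq_iff_eq]
  exact forall₂_congr fun _ _ => eq_comm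

theorem Prec.of_le {κ : Cardinal.{u}} {G₁ G₂ : Subgroup (Equiv.Perm Ω)} (h : G₁ ≤ G₂)
    (hκ : κ ≠ 0) : Prec κ G₁ G₂ :=
  ⟨∅, by simpa [pos_iff_ne_zero] using hκ,
    h.trans (Subgroup.subset_closure.trans (Subgroup.closure_mono Set.subset_union_left))⟩

/-- Coset representatives of `H` in `G`, together with `H`, generate `G`. -/
theorem Prec.of_mk_quotient_lt {κ : Cardinal.{u}} {G H : Subgroup (Equiv.Perm Ω)}
    (hκ : #(G ⧸ H.subgroupOf G) < κ) : Prec κ G H := by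
  let rep : G ⧸ H.subgroupOf G → Equiv.Perm Ω := fun q => (q.out : Equiv.Perm Ω)
  refine ⟨Set.range rep, Cardinal.mk_range_le.trans_lt hκ, fun g hg => ?_⟩
  obtain ⟨h, hrep⟩ := QuotientGroup.mk_out_eq_mul (H.subgroupOf G) ⟨g, hg⟩
  have hg_eq : g = rep (⟨g, hg⟩ : G) * ((h : G) : Equiv.Perm Ω)⁻¹ := by
    simp only [rep, hrep, Subgroup.coe_mul, mul_inv_cancel_right]
  rw [hg_eq]
  exact mul_mem (Subgroup.subset_closure (Or.inr ⟨_, rfl⟩))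
    (inv_mem (Subgroup.subset_closure (Or.inl h.2)))

/-- A coset of `G_(s)` in `G` is determined by the common restriction of its members to `s`. -/
theorem mk_quotient_pstab_le (G : Subgroup (Equiv.Perm Ω)) (s : Set Ω) :
    #(G ⧸ (pstab G s).subgroupOf G) ≤ #Ω ^ #s := by
  rw [Cardinal.power_def]
  refine Cardinal.mk_le_of_injective (f := fun q (x : s) => (q.out : Equiv.Perm Ω) x) ?_
  intro q₁ q₂ hq
  rw [← q₁.out_eq, ← q₂.out_eq, QuotientGroup.eq, Subgroup.mem_subgroupOf]
  exact (inv_mul_mem_pstab_iff q₁.out.2 q₂.out.2).2 fun x hx => congrFun hq ⟨x, hx⟩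

theorem stmt0_general {Ω : Type u} (G : Subgroup (Equiv.Perm Ω)) (Γ : Set Ω)
    (hΓ : (#Ω) ^ (#Γ) ≤ #Ω) :
    CApprox (Order.succ (#Ω)) (pstab G Γ) G :=
  ⟨Prec.of_le (pstab_le G Γ) (Cardinal.succ_ne_zero _),
    Prec.of_mk_quotient_lt (((mk_quotient_pstab_le G Γ).trans hΓ).trans_lt (Order.lt_succ _))⟩

/-- Lemma 2.2: for `Γ ⊆ Ω` with `|Ω|^{|Γ|} ≤ |Ω|`, the pointwise
stabilizer `G_(Γ)` satisfies `G_(Γ) ≈_{|Ω|⁺} G`. -/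
theorem stmt0 {Ω : Type u} [Infinite Ω] (G : Subgroup (Equiv.Perm Ω)) (Γ : Set Ω)
    (hΓ : (#Ω) ^ (#Γ) ≤ #Ω) :
    CApprox (Order.succ (#Ω)) (pstab G Γ) G :=
  stmt0_general G Γ hΓ
end

section
/- Suppose Ω is an infinite set, κ a regular cardinal ≤ |Ω|, d a κ-uncrowded (respectively, uniformly κ-uncrowded) generalized metric on Ω, and G a subgroup of Sym(Ω) all of whose elements are bounded with respect to d. Then for any subset U ⊆ Sym(Ω) of cardinality < κ there exists a generalized metric d′ on Ω with d′(α,β) ≤ d(α,β) for all α,β ∈ Ω, again κ-uncrowded (respectively, uniformly κ-uncrowded), such that every element of U, and hence every element of ⟨G ∪ U⟩, is bounded with respect to d′. -/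
open scoped Cardinal ENNReal

universe u

variable {Ω : Type u}

/-!
Let `S = U ∪ U⁻¹` and let `d'` be the path metric of the step cost `min (d x y) (j x y)`, where
`j x y = 1` if `y = g x` for some `g ∈ S` and `j x y = ∞` otherwise. Then `d' ≤ d` and every
`g ∈ S` moves each point by at most `1`, so the `d'`-bounded permutations, a subgroup, contain
`G ∪ U`; and since each step costs at least `min d 1`, `d'` is still a metric.
A chain of cost `< r ≤ n` makes at most `n` jumps, and its `d`-steps between consecutive jumps
add up to less than `r`. So a `d'`-ball of radius `r` lies in the set reached from the `d`-ball of
radius `r` by `n` rounds of "apply an element of `S`, then take a `d`-ball of radius `r`", which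
has fewer than `κ` points by regularity of `κ` (uniformly so if `d` is uniformly uncrowded).
-/

open scoped Pointwise

theorem Cardinal.power_nat_lt {a c : Cardinal} (hc : ℵ₀ ≤ c) (ha : a < c) (n : ℕ) :
    a ^ n < c := by
  induction n with
  | zero => simpa using Cardinal.one_lt_aleph0.trans_le hc
  | succ n ih => rw [pow_succ]; exact Cardinal.mul_lt_of_lt hc ih ha

theorem IsGenMetric.min_const {d : Ω → Ω → ℝ≥0∞} (hd : IsGenMetric d) {ε : ℝ≥0∞}
    (hε : ε ≠ 0) : IsGenMetric fun x y => min (d x y) ε where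
  eq_zero_iff α β := by simp [hε, hd.eq_zero_iff]
  symm α β := by rw [hd.symm]
  triangle α β γ := by
    calc min (d α γ) ε ≤ min (d α β + d β γ) ε := min_le_min_right _ (hd.triangle α β γ)
      _ ≤ min (d α β) ε + min (d β γ) ε := by
        rcases le_total (d α β) ε with h₁ | h₁ <;> rcases le_total (d β γ) ε with h₂ | h₂ <;>
          simp [h₁, h₂]

theorem BoundedPerm.mono {d d' : Ω → Ω → ℝ≥0∞} {g : Equiv.Perm Ω}
    (hg : BoundedPerm d g) (h : ∀ α β, d' α β ≤ d α β) : BoundedPerm d' g :=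
  (iSup_mono fun α => h α (g α)).trans_lt hg

theorem BoundedPerm.of_mem_closure {d : Ω → Ω → ℝ≥0∞} (hd : IsGenMetric d)
    {s : Set (Equiv.Perm Ω)} (hs : ∀ g ∈ s, BoundedPerm d g) {g : Equiv.Perm Ω}
    (hg : g ∈ Subgroup.closure s) : BoundedPerm d g :=
  (Subgroup.closure_le (FN d hd)).2 hs hg

theorem mem_gball_self {d : Ω → Ω → ℝ≥0∞} (hd : IsGenMetric d) {r : ℝ≥0∞} (hr : 0 < r)
    (α : Ω) : α ∈ gball d α r := by
  show d α α < r
  rwa [(hd.eq_zero_iff α α).2 rfl]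

theorem gball_mono {d : Ω → Ω → ℝ≥0∞} {r r' : ℝ≥0∞} (hr : r ≤ r') (α : Ω) :
    gball d α r ⊆ gball d α r' :=
  fun _ h => lt_of_lt_of_le h hr

theorem gball_subset_gball {d : Ω → Ω → ℝ≥0∞} (hd : IsGenMetric d) {α γ : Ω} {r r' : ℝ≥0∞}
    (hfin : d α γ ≠ ⊤) (h : d α γ + r' ≤ r) : gball d γ r' ⊆ gball d α r :=
  fun x hx => ((hd.triangle α γ x).trans_lt (ENNReal.add_lt_add_left hfin hx)).trans_le h

section PathDist

variable {c : Ω → Ω → ℝ≥0∞}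

def chainCost (c : Ω → Ω → ℝ≥0∞) : Ω → List Ω → Ω → ℝ≥0∞
  | α, [], β => c α β
  | α, γ :: l, β => c α γ + chainCost c γ l β

noncomputable def pathDist (c : Ω → Ω → ℝ≥0∞) (α β : Ω) : ℝ≥0∞ :=
  ⨅ l : List Ω, chainCost c α l β

theorem chainCost_append (l₁ : List Ω) (α γ β : Ω) (l₂ : List Ω) :
    chainCost c α (l₁ ++ γ :: l₂) β = chainCost c α l₁ γ + chainCost c γ l₂ β := by
  induction l₁ generalizing α with
  | nil => rfl
  | cons δ l ih => simp only [List.cons_append, chainCost, ih, add_assoc]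

theorem chainCost_reverse (hc : ∀ x y, c x y = c y x) (l : List Ω) (α β : Ω) :
    chainCost c α l β = chainCost c β l.reverse α := by
  induction l generalizing α with
  | nil => exact hc α β
  | cons γ l ih =>
    rw [List.reverse_cons, chainCost_append, ← ih]
    exact (add_comm _ _).trans (congrArg _ (hc α γ))

theorem le_chainCost {m : Ω → Ω → ℝ≥0∞} (hm : ∀ x y z, m x z ≤ m x y + m y z)
    (hmc : ∀ x y, m x y ≤ c x y) (l : List Ω) (α β : Ω) : m α β ≤ chainCost c α l β := by
  induction l generalizing α with
  | nil => exact hmc α β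
  | cons γ l ih => exact (hm α γ β).trans (add_le_add (hmc α γ) (ih γ))

theorem pathDist_le (α β : Ω) : pathDist c α β ≤ c α β :=
  iInf_le _ []

theorem le_pathDist {m : Ω → Ω → ℝ≥0∞} (hm : ∀ x y z, m x z ≤ m x y + m y z)
    (hmc : ∀ x y, m x y ≤ c x y) (α β : Ω) : m α β ≤ pathDist c α β :=
  le_iInf fun l => le_chainCost hm hmc l α β

theorem pathDist_triangle (α β γ : Ω) :
    pathDist c α γ ≤ pathDist c α β + pathDist c β γ := by
  simp only [pathDist, ENNReal.iInf_add, ENNReal.add_iInf]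
  exact le_iInf₂ fun l₂ l₁ => (iInf_le _ (l₁ ++ β :: l₂)).trans_eq (chainCost_append ..)

theorem pathDist_symm (hc : ∀ x y, c x y = c y x) (α β : Ω) :
    pathDist c α β = pathDist c β α := by
  have key : ∀ x y, pathDist c x y ≤ pathDist c y x := fun x y =>
    le_iInf fun l => (iInf_le _ l.reverse).trans_eq (chainCost_reverse hc l y x).symm
  exact (key α β).antisymm (key β α)

theorem isGenMetric_pathDist {m : Ω → Ω → ℝ≥0∞} (hm : IsGenMetric m)
    (hmc : ∀ x y, m x y ≤ c x y) (hc : ∀ x y, c x y = c y x) (hc₀ : ∀ x, c x x = 0) :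
    IsGenMetric (pathDist c) where
  eq_zero_iff α β := by
    refine ⟨fun h => (hm.eq_zero_iff α β).1 ?_, fun h => ?_⟩
    · exact nonpos_iff_eq_zero.1 (h ▸ le_pathDist hm.triangle hmc α β)
    · exact nonpos_iff_eq_zero.1 (h ▸ hc₀ α ▸ pathDist_le α α)
  symm := pathDist_symm hc
  triangle := pathDist_triangle

end PathDist

section JumpMetric

variable {d : Ω → Ω → ℝ≥0∞} {S : Set (Equiv.Perm Ω)} {r : ℝ≥0∞}

open Classical in
noncomputable def jumpCost (S : Set (Equiv.Perm Ω)) (x y : Ω) : ℝ≥0∞ :=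
  if ∃ g ∈ S, g x = y then 1 else ⊤

noncomputable def stepCost (d : Ω → Ω → ℝ≥0∞) (S : Set (Equiv.Perm Ω)) (x y : Ω) : ℝ≥0∞ :=
  min (d x y) (jumpCost S x y)

/-- The largest metric below `d` in which every `g ∈ S` moves each point by at most `1`. -/
noncomputable def jumpMetric (d : Ω → Ω → ℝ≥0∞) (S : Set (Equiv.Perm Ω)) : Ω → Ω → ℝ≥0∞ :=
  pathDist (stepCost d S)

theorem one_le_jumpCost (x y : Ω) : 1 ≤ jumpCost S x y := by
  unfold jumpCost; split_ifs <;> simp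

theorem jumpCost_symm (hS : ∀ g ∈ S, g⁻¹ ∈ S) (x y : Ω) : jumpCost S x y = jumpCost S y x := by
  have hiff : ∀ x y : Ω, (∃ g ∈ S, g x = y) → ∃ g ∈ S, g y = x := by
    rintro x _ ⟨g, hg, rfl⟩
    exact ⟨g⁻¹, hS g hg, g.symm_apply_apply x⟩
  unfold jumpCost
  congr 1
  exact propext ⟨hiff x y, hiff y x⟩

theorem stepCost_apply_le_one {g : Equiv.Perm Ω} (hg : g ∈ S) (x : Ω) :
    stepCost d S x (g x) ≤ 1 :=
  (min_le_right _ _).trans_eq (if_pos ⟨g, hg, rfl⟩)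

theorem le_stepCost_or (x y : Ω) :
    d x y ≤ stepCost d S x y ∨ (∃ g ∈ S, g x = y) ∧ stepCost d S x y = 1 := by
  unfold stepCost jumpCost
  split_ifs with h
  · rcases le_total (d x y) 1 with h₁ | h₁
    · simp [h₁]
    · simp [h, h₁]
  · simp

theorem isGenMetric_jumpMetric (hd : IsGenMetric d) (hS : ∀ g ∈ S, g⁻¹ ∈ S) :
    IsGenMetric (jumpMetric d S) :=
  isGenMetric_pathDist (hd.min_const one_ne_zero)
    (fun x y => min_le_min_left _ (one_le_jumpCost x y))
    (fun x y => by rw [stepCost, stepCost, hd.symm, jumpCost_symm hS])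
    (fun x => by simp [stepCost, (hd.eq_zero_iff x x).2 rfl])

theorem jumpMetric_le (α β : Ω) : jumpMetric d S α β ≤ d α β :=
  (pathDist_le α β).trans (min_le_left _ _)

theorem boundedPerm_jumpMetric {g : Equiv.Perm Ω} (hg : g ∈ S) :
    BoundedPerm (jumpMetric d S) g :=
  (iSup_le fun α => (pathDist_le _ _).trans (stepCost_apply_le_one hg α)).trans_lt
    ENNReal.one_lt_top

def grow (d : Ω → Ω → ℝ≥0∞) (S : Set (Equiv.Perm Ω)) (r : ℝ≥0∞) (A : Set Ω) : Set Ω :=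
  A ∪ ⋃ β ∈ A, ⋃ g ∈ S, gball d (g β) r

theorem grow_mono {r' : ℝ≥0∞} {A B : Set Ω} (hr : r ≤ r') (hAB : A ⊆ B) :
    grow d S r A ⊆ grow d S r' B :=
  Set.union_subset_union hAB <| Set.biUnion_mono hAB fun β _ =>
    Set.iUnion₂_mono fun g _ => gball_mono hr (g β)

theorem iterate_grow_mono {r' : ℝ≥0∞} {A B : Set Ω} (hr : r ≤ r') (hAB : A ⊆ B) (n : ℕ) :
    (grow d S r)^[n] A ⊆ (grow d S r')^[n] B := by
  induction n generalizing A B with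
  | zero => exact hAB
  | succ n ih => exact ih (grow_mono hr hAB)

theorem subset_iterate_grow (A : Set Ω) (n : ℕ) : A ⊆ (grow d S r)^[n] A := by
  induction n with
  | zero => exact subset_rfl
  | succ n ih => exact ih.trans (Function.iterate_succ_apply' _ n A ▸ Set.subset_union_left)

theorem mem_iterate_grow_of_step (hd : IsGenMetric d) {α γ β : Ω} {t : ℝ≥0∞} {n : ℕ}
    (hr : stepCost d S α γ + t < r) (hn : stepCost d S α γ + t ≤ n)
    (hγ : ∀ (r' : ℝ≥0∞) (n' : ℕ), t < r' → t ≤ n' → β ∈ (grow d S r')^[n'] (gball d γ r')) :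
    β ∈ (grow d S r)^[n] (gball d α r) := by
  rcases le_stepCost_or α γ with hαγ | ⟨⟨g, hg, rfl⟩, hstep⟩
  · -- a `d`-step: continue from `γ` with the radius reduced by `d α γ`
    have hr' : d α γ + t < r := (add_le_add_left hαγ t).trans_lt hr
    have hfin : d α γ ≠ ⊤ := ne_top_of_lt (le_self_add.trans_lt hr')
    refine iterate_grow_mono tsub_le_self
      (gball_subset_gball hd hfin (add_tsub_cancel_of_le (le_self_add.trans hr'.le)).le) n
      (hγ _ n ((ENNReal.cancel_of_ne hfin).lt_tsub_iff_left.2 hr') ?_)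
    exact le_add_self.trans ((add_le_add_left hαγ t).trans hn)
  · -- a jump by `g ∈ S`, paid for by one round of `grow`
    rw [hstep] at hr hn
    obtain ⟨m, rfl⟩ : ∃ m, n = m + 1 :=
      Nat.exists_eq_add_one.2 (Nat.one_le_cast.1 (le_self_add.trans hn))
    have htm : t ≤ m := by
      rwa [Nat.cast_add, Nat.cast_one, add_comm 1 t,
        ENNReal.add_le_add_iff_right ENNReal.one_ne_top] at hn
    have hr₀ : 0 < r := (zero_lt_one.trans_le le_self_add).trans hr
    rw [Function.iterate_succ_apply]
    refine iterate_grow_mono le_rfl (fun x hx => ?_) m (hγ r m (le_add_self.trans_lt hr) htm)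
    exact Or.inr (Set.mem_biUnion (mem_gball_self hd hr₀ α) (Set.mem_biUnion hg hx))

theorem mem_iterate_grow_of_chainCost (hd : IsGenMetric d) (l : List Ω) {α β : Ω} {n : ℕ}
    (hr : chainCost (stepCost d S) α l β < r) (hn : chainCost (stepCost d S) α l β ≤ n) :
    β ∈ (grow d S r)^[n] (gball d α r) := by
  induction l generalizing α r n with
  | nil =>
    exact mem_iterate_grow_of_step hd (t := 0) (by rwa [add_zero]) (by rwa [add_zero])
      fun r' n' hr' _ => subset_iterate_grow _ n' (mem_gball_self hd hr' β)
  | cons γ l ih => exact mem_iterate_grow_of_step hd hr hn fun r' n' => ih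

theorem gball_jumpMetric_subset (hd : IsGenMetric d) {n : ℕ} (hrn : r ≤ n) (α : Ω) :
    gball (jumpMetric d S) α r ⊆ (grow d S r)^[n] (gball d α r) := fun β hβ => by
  obtain ⟨l, hl⟩ := iInf_lt_iff.1 (show ⨅ l, chainCost (stepCost d S) α l β < r from hβ)
  exact mem_iterate_grow_of_chainCost hd l hl (hl.le.trans hrn)

theorem mk_grow_lt {κ : Cardinal.{u}} (hreg : κ.IsRegular) (hun : Uncrowded κ d) (hS : #S < κ)
    (hr : r < ⊤) {A : Set Ω} (hA : #A < κ) : #(grow d S r A) < κ :=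
  (Cardinal.mk_union_le _ _).trans_lt <| Cardinal.add_lt_of_lt hreg.aleph0_le hA <|
    (Cardinal.card_biUnion_lt_iff_forall_of_isRegular hreg hA).2 fun _ _ =>
      (Cardinal.card_biUnion_lt_iff_forall_of_isRegular hreg hS).2 fun _ _ => hun _ r hr

theorem mk_iterate_grow_lt {κ : Cardinal.{u}} (hreg : κ.IsRegular) (hun : Uncrowded κ d)
    (hS : #S < κ) (hr : r < ⊤) {A : Set Ω} (hA : #A < κ) (n : ℕ) :
    #((grow d S r)^[n] A) < κ := by
  induction n with
  | zero => exact hA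
  | succ n ih => rw [Function.iterate_succ_apply']; exact mk_grow_lt hreg hun hS hr ih

theorem mk_grow_le {μ : Cardinal.{u}} (hμ : ∀ α, #(gball d α r) ≤ μ) (A : Set Ω) :
    #(grow d S r A) ≤ #A * (1 + #S * μ) := by
  have hjump : ∀ β : Ω, #(⋃ g ∈ S, gball d (g β) r) ≤ #S * μ := fun β => by
    refine (Cardinal.mk_biUnion_le _ _).trans ?_
    gcongr
    exact ciSup_le' fun _ => hμ _
  have hjumps : #(⋃ β ∈ A, ⋃ g ∈ S, gball d (g β) r) ≤ #A * (#S * μ) := by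
    refine (Cardinal.mk_biUnion_le _ _).trans ?_
    gcongr
    exact ciSup_le' fun β => hjump β
  calc #(grow d S r A) ≤ #A + #A * (#S * μ) :=
        (Cardinal.mk_union_le _ _).trans (add_le_add_right hjumps _)
    _ = #A * (1 + #S * μ) := by rw [mul_add, mul_one]

theorem mk_iterate_grow_le {μ : Cardinal.{u}} (hμ : ∀ α, #(gball d α r) ≤ μ) (A : Set Ω)
    (n : ℕ) : #((grow d S r)^[n] A) ≤ #A * (1 + #S * μ) ^ n := by
  induction n with
  | zero => simp
  | succ n ih =>
    rw [Function.iterate_succ_apply', pow_succ, ← mul_assoc]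
    exact (mk_grow_le hμ _).trans (mul_le_mul_left ih _)

theorem uncrowded_jumpMetric {κ : Cardinal.{u}} (hd : IsGenMetric d) (hreg : κ.IsRegular)
    (hun : Uncrowded κ d) (hS : #S < κ) : Uncrowded κ (jumpMetric d S) := by
  intro α r hr
  obtain ⟨n, hn⟩ := ENNReal.exists_nat_gt hr.ne
  exact (Cardinal.mk_le_mk_of_subset (gball_jumpMetric_subset hd hn.le α)).trans_lt
    (mk_iterate_grow_lt hreg hun hS hr (hun α r hr) n)

theorem unifUncrowded_jumpMetric {κ : Cardinal.{u}} (hd : IsGenMetric d) (hreg : κ.IsRegular)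
    (hun : UnifUncrowded κ d) (hS : #S < κ) : UnifUncrowded κ (jumpMetric d S) := by
  intro r hr
  obtain ⟨n, hn⟩ := ENNReal.exists_nat_gt hr.ne
  obtain ⟨μ, hμκ, hμ⟩ := hun r hr
  have hκ := hreg.aleph0_le
  refine ⟨μ * (1 + #S * μ) ^ n, ?_, fun α => ?_⟩
  · refine Cardinal.mul_lt_of_lt hκ hμκ (Cardinal.power_nat_lt hκ ?_ n)
    exact Cardinal.add_lt_of_lt hκ (Cardinal.one_lt_aleph0.trans_le hκ)
      (Cardinal.mul_lt_of_lt hκ hS hμκ)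
  · exact (Cardinal.mk_le_mk_of_subset (gball_jumpMetric_subset hd hn.le α)).trans
      ((mk_iterate_grow_le hμ _ n).trans (mul_le_mul_left (hμ α) _))

end JumpMetric

theorem stmt1_general {Ω : Type u} (κ : Cardinal.{u}) (hreg : κ.IsRegular)
    (d : Ω → Ω → ℝ≥0∞) (hd : IsGenMetric d) (hun : Uncrowded κ d)
    (G : Subgroup (Equiv.Perm Ω)) (hG : ∀ g ∈ G, BoundedPerm d g)
    (U : Set (Equiv.Perm Ω)) (hU : #U < κ) :
    ∃ d' : Ω → Ω → ℝ≥0∞, IsGenMetric d' ∧ (∀ α β, d' α β ≤ d α β) ∧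
      Uncrowded κ d' ∧ (UnifUncrowded κ d → UnifUncrowded κ d') ∧
      (∀ g ∈ U, BoundedPerm d' g) ∧
      (∀ g ∈ Subgroup.closure ((G : Set (Equiv.Perm Ω)) ∪ U), BoundedPerm d' g) := by
  set S : Set (Equiv.Perm Ω) := U ∪ U⁻¹
  have hSinv : ∀ g ∈ S, g⁻¹ ∈ S := fun g hg => by simpa [S, or_comm] using hg
  have hSκ : #S < κ := (Cardinal.mk_union_le _ _).trans_lt <|
    Cardinal.add_lt_of_lt hreg.aleph0_le hU (Cardinal.mk_inv U ▸ hU)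
  have hd' := isGenMetric_jumpMetric hd hSinv
  have hUb : ∀ g ∈ U, BoundedPerm (jumpMetric d S) g := fun g hg =>
    boundedPerm_jumpMetric (Or.inl hg)
  refine ⟨jumpMetric d S, hd', jumpMetric_le, uncrowded_jumpMetric hd hreg hun hSκ,
    fun h => unifUncrowded_jumpMetric hd hreg h hSκ, hUb,
    fun g => BoundedPerm.of_mem_closure hd' ?_⟩
  rintro g (hg | hg)
  exacts [(hG g hg).mono jumpMetric_le, hUb g hg]

/-- Theorem 3.2. -/
theorem stmt1 {Ω : Type u} [Infinite Ω] (κ : Cardinal.{u}) (hreg : κ.IsRegular)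
    (hκ : κ ≤ #Ω) (d : Ω → Ω → ℝ≥0∞) (hd : IsGenMetric d) (hun : Uncrowded κ d)
    (G : Subgroup (Equiv.Perm Ω)) (hG : ∀ g ∈ G, BoundedPerm d g)
    (U : Set (Equiv.Perm Ω)) (hU : #U < κ) :
    ∃ d' : Ω → Ω → ℝ≥0∞, IsGenMetric d' ∧ (∀ α β, d' α β ≤ d α β) ∧
      Uncrowded κ d' ∧ (UnifUncrowded κ d → UnifUncrowded κ d') ∧
      (∀ g ∈ U, BoundedPerm d' g) ∧
      (∀ g ∈ Subgroup.closure ((G : Set (Equiv.Perm Ω)) ∪ U), BoundedPerm d' g) :=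
  stmt1_general κ hreg d hd hun G hG U hU
end

section
/- Call a permutation g of the set ω of natural numbers local if for every i ∈ ω there exists j > i in ω such that g carries the set {0, 1, …, j−1} to itself. Then every permutation f of ω is a product g·h of two local permutations. -/
open scoped Cardinal ENNReal

universe u

variable {Ω : Type u}

/-- A permutation `g` of `ℕ` is local if for every `i` there is `j > i` with
`g` carrying `{0, …, j-1}` onto itself. -/
def IsLocalPerm (g : Equiv.Perm ℕ) : Prop :=
  ∀ i : ℕ, ∃ j > i, (g : ℕ → ℕ) '' {k | k < j} = {k | k < j}

/-!
Choose `n₀ < n₁ < ⋯` so that `f` and `f⁻¹` map `[0, nₖ)` into `[0, nₖ₊₁)`. Then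
`[0, n₀) ⊆ f⁻¹[0, n₁) ⊆ [0, n₂) ⊆ f⁻¹[0, n₃) ⊆ ⋯` and `[0, n₀) ⊆ [0, n₁) ⊆ [0, n₂) ⊆ ⋯` are
two exhausting chains of finite sets with the same cardinalities, so some permutation `g`
carries the first chain onto the second, term by term. Then `g` fixes every `[0, n₂ₖ)`
setwise and `f g⁻¹` fixes every `[0, n₂ₖ₊₁)` setwise.
-/

section ChainEquiv

variable {α β : Type*} {X : ℕ → Set α} {Y : ℕ → Set β}

noncomputable def entryIndex (X : ℕ → Set α) (a : α) : ℕ := sInf {i | a ∈ X i}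

lemma entryIndex_le_iff (hXm : Monotone X) {a : α} (ha : ∃ i, a ∈ X i) (i : ℕ) :
    entryIndex X a ≤ i ↔ a ∈ X i :=
  ⟨fun h => hXm h (Nat.sInf_mem ha), fun h => Nat.sInf_le h⟩

lemma setOf_entryIndex_eq_zero (hXm : Monotone X) (hX : ∀ a, ∃ i, a ∈ X i) :
    {a | entryIndex X a = 0} = X 0 := by
  ext a
  rw [Set.mem_ofPred_eq, ← entryIndex_le_iff hXm (hX a), Nat.le_zero]

lemma setOf_entryIndex_eq_succ (hXm : Monotone X) (hX : ∀ a, ∃ i, a ∈ X i) (i : ℕ) :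
    {a | entryIndex X a = i + 1} = X (i + 1) \ X i := by
  ext a
  rw [Set.mem_ofPred_eq, Set.mem_sdiff, ← entryIndex_le_iff hXm (hX a),
    ← entryIndex_le_iff hXm (hX a)]
  omega

theorem exists_equiv_image_eq_of_ncard_eq (hXm : Monotone X) (hYm : Monotone Y)
    (hXf : ∀ i, (X i).Finite) (hYf : ∀ i, (Y i).Finite) (hX : ∀ a, ∃ i, a ∈ X i)
    (hY : ∀ b, ∃ i, b ∈ Y i) (hcard : ∀ i, (X i).ncard = (Y i).ncard) :
    ∃ e : α ≃ β, ∀ i, e '' X i = Y i := by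
  have hfiber (i : ℕ) :
      Nonempty ({a // entryIndex X a = i} ≃ {b // entryIndex Y b = i}) := by
    have : Finite {a // entryIndex X a = i} :=
      ((hXf i).subset fun a ha => (entryIndex_le_iff hXm (hX a) i).1 ha.le).to_subtype
    have : Finite {b // entryIndex Y b = i} :=
      ((hYf i).subset fun b hb => (entryIndex_le_iff hYm (hY b) i).1 hb.le).to_subtype
    refine Finite.card_eq.1 ?_
    change Set.ncard {a | entryIndex X a = i} = Set.ncard {b | entryIndex Y b = i}
    cases i with
    | zero => rw [setOf_entryIndex_eq_zero hXm hX, setOf_entryIndex_eq_zero hYm hY, hcard]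
    | succ i =>
      rw [setOf_entryIndex_eq_succ hXm hX, setOf_entryIndex_eq_succ hYm hY,
        Set.ncard_sdiff (hXm i.le_succ) (hXf i), Set.ncard_sdiff (hYm i.le_succ) (hYf i),
        hcard, hcard]
  let e := Equiv.ofFiberEquiv fun i => (hfiber i).some
  have he (a : α) : entryIndex Y (e a) = entryIndex X a := Equiv.ofFiberEquiv_map _ a
  refine ⟨e, fun i => Set.ext fun b => ?_⟩
  rw [e.image_eq_preimage_symm, Set.mem_preimage, ← entryIndex_le_iff hXm (hX _),
    ← entryIndex_le_iff hYm (hY b), ← he, e.apply_symm_apply]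

end ChainEquiv

lemma exists_strictMono_forall_lt_imp_lt (p : ℕ → ℕ) :
    ∃ n : ℕ → ℕ, StrictMono n ∧ ∀ k, ∀ m < n k, p m < n (k + 1) := by
  have hstep (N : ℕ) : ∃ M, N < M ∧ ∀ m < N, p m < M :=
    ⟨N + 1 + ∑ m ∈ Finset.range N, p m, by omega, fun m hm => by
      have := Finset.single_le_sum (fun i _ => Nat.zero_le (p i)) (Finset.mem_range.2 hm)
      omega⟩
  choose next hnext using hstep
  refine ⟨fun k => next^[k] 0, strictMono_nat_of_lt_succ fun k => ?_, fun k => ?_⟩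
  all_goals simp only [Function.iterate_succ_apply']
  exacts [(hnext _).1, (hnext _).2]

lemma IsLocalPerm.of_image_Iio_eq {g : Equiv.Perm ℕ} {n : ℕ → ℕ} (hn : StrictMono n)
    (hg : ∀ k, g '' Set.Iio (n k) = Set.Iio (n k)) : IsLocalPerm g :=
  fun i => ⟨n (i + 1), (Nat.lt_succ_self i).trans_le hn.le_apply, hg (i + 1)⟩

lemma Equiv.Perm.image_mul_inv_eq_of_image_preimage_eq {α : Type*} {f g : Equiv.Perm α}
    {t : Set α} (hg : g '' (f ⁻¹' t) = t) : (f * g⁻¹) '' t = t := by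
  conv_lhs => rw [← hg]
  rw [← Set.image_comp, ← Equiv.Perm.coe_mul, mul_assoc, inv_mul_cancel, mul_one,
    Set.image_preimage_eq t f.surjective]

section InterleavedChain

variable (f : Equiv.Perm ℕ) (n : ℕ → ℕ)

def interleavedChain (i : ℕ) : Set ℕ :=
  if Even i then Set.Iio (n i) else f ⁻¹' Set.Iio (n i)

lemma interleavedChain_two_mul (k : ℕ) : interleavedChain f n (2 * k) = Set.Iio (n (2 * k)) :=
  if_pos (even_two_mul k)

lemma interleavedChain_two_mul_add_one (k : ℕ) :
    interleavedChain f n (2 * k + 1) = f ⁻¹' Set.Iio (n (2 * k + 1)) :=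
  if_neg (Nat.not_even_iff_odd.2 (odd_two_mul_add_one k))

lemma finite_interleavedChain (i : ℕ) : (interleavedChain f n i).Finite := by
  unfold interleavedChain
  split_ifs
  exacts [Set.finite_Iio _, (Set.finite_Iio _).preimage f.injective.injOn]

lemma ncard_interleavedChain (i : ℕ) :
    (interleavedChain f n i).ncard = (Set.Iio (n i)).ncard := by
  unfold interleavedChain
  split_ifs
  exacts [rfl, Set.ncard_preimage_of_injective_subset_range f.injective (by simp)]

variable {f n}

lemma monotone_interleavedChain (hnf : ∀ k, ∀ m < n k, max (f m) (f.symm m) < n (k + 1)) :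
    Monotone (interleavedChain f n) := by
  refine monotone_nat_of_le_succ fun i => ?_
  rcases Nat.even_or_odd i with hi | hi
  · rw [interleavedChain, if_pos hi, interleavedChain, if_neg (Nat.not_even_iff_odd.2 hi.add_one)]
    exact fun m hm => (max_lt_iff.1 (hnf i m hm)).1
  · rw [interleavedChain, if_neg (Nat.not_even_iff_odd.2 hi), interleavedChain, if_pos hi.add_one]
    intro m hm
    simpa using (max_lt_iff.1 (hnf i (f m) hm)).2

lemma exists_mem_interleavedChain (hn : StrictMono n) (m : ℕ) :
    ∃ i, m ∈ interleavedChain f n i :=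
  ⟨2 * (m + 1), by
    rw [interleavedChain_two_mul]
    exact (show m < 2 * (m + 1) by omega).trans_le hn.le_apply⟩

end InterleavedChain

-- The paper's permutations act on the right, so its product `g·h` is `h * g` here.
/-- Lemma 5.2: every permutation of `ℕ` is a product of two local
permutations.  (Permutations act on the right, so the paper's product `g·h`
is `h * g` here; since both factors are arbitrary local permutations the
statement is the same.) -/
theorem stmt5 (f : Equiv.Perm ℕ) :
    ∃ g h : Equiv.Perm ℕ, IsLocalPerm g ∧ IsLocalPerm h ∧ f = h * g := by
  obtain ⟨n, hn, hnf⟩ := exists_strictMono_forall_lt_imp_lt fun m => max (f m) (f.symm m)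
  obtain ⟨g, hg⟩ := exists_equiv_image_eq_of_ncard_eq (monotone_interleavedChain hnf)
    (fun _ _ h => Set.Iio_subset_Iio (hn.monotone h)) (finite_interleavedChain f n)
    (fun _ => Set.finite_Iio _) (exists_mem_interleavedChain hn)
    (fun m => ⟨m + 1, (Nat.lt_succ_self m).trans_le hn.le_apply⟩) (ncard_interleavedChain f n)
  refine ⟨g, f * g⁻¹, ?_, ?_, by group⟩
  · refine IsLocalPerm.of_image_Iio_eq (n := fun k => n (2 * k))
      (hn.comp fun _ _ h => by omega) fun k => ?_
    simpa only [interleavedChain_two_mul] using hg (2 * k)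
  · refine IsLocalPerm.of_image_Iio_eq (n := fun k => n (2 * k + 1))
      (hn.comp fun _ _ h => by omega) fun k => ?_
    refine Equiv.Perm.image_mul_inv_eq_of_image_preimage_eq ?_
    simpa only [interleavedChain_two_mul_add_one] using hg (2 * k + 1)
end

section
/- Let Ω be a countably infinite set and G a subgroup of Sym(Ω), and suppose there exist two disjoint sequences (αᵢ)_{i∈ω} and (βᵢ)_{i∈ω} of distinct elements of Ω such that for every sequence (γᵢ)_{i∈ω} with γᵢ ∈ {αᵢ, βᵢ} for each i, there exists g ∈ G with γᵢ = αᵢg for all i. Then S_(A₀) ≼ G, where A₀ is a partition of Ω having infinitely many 1-element members, infinitely many 2-element members, and no other members. -/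
open scoped Cardinal ENNReal

universe u

variable {Ω : Type u}

/-!
Index the sequences by `ℤ × ZMod 2` instead of `ℕ`, so that the `α`-points come in pairs
`a (i, 0), a (i, 1)`. A permutation `t` carries these pairs onto the 2-element blocks of `A₀` and
the remaining points onto the singletons, so every `f ∈ S_(A₀)` is the conjugate by `t` of the
permutation swapping the pairs `i ∈ T` and fixing everything else; on indices this swap is
`fibreShear T`, with `T : ℤ → ZMod 2`.

For `χ : ℤ → ZMod 2`, the hypothesis gives `g ∈ G` sending `a (i, 0)` to `a' (i, 0)` exactly when
`χ i = 1` and fixing the other `α`-points. With the fixed involutions `e` (swapping within the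
`α`-pairs) and `E` (swapping within the `α`- and the `β`-pairs), `R = (g⁻¹ E g e)²` acts on the
`α`-points as `fibreShear χ`, but in an uncontrolled way elsewhere. Its commutator with the shift
`i ↦ i + 1` of the pairs cancels the uncontrolled part, because the shift fixes every point off the
pairs, and acts on the pairs as `fibreShear (Δ_[1] χ)`. Every `T` is a forward difference.
-/

open Equiv Function Set
open scoped fwdDiff commutatorElement

section Shear

variable {H M : Type*} [AddCommGroup M]

def fibreShear (χ : H → M) : Perm (H × M) :=
  Equiv.prodShear (Equiv.refl H) fun i => Equiv.addRight (χ i)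

@[simp]
theorem fibreShear_apply (χ : H → M) (x : H × M) : fibreShear χ x = (x.1, x.2 + χ x.1) := rfl

@[simp]
theorem fibreShear_inv_apply (χ : H → M) (x : H × M) :
    (fibreShear χ)⁻¹ x = (x.1, x.2 - χ x.1) := by
  rw [Perm.inv_eq_iff_eq]
  simp

variable [AddCommGroup H]

def baseShift (h : H) : Perm (H × M) := Equiv.prodCongr (Equiv.addRight h) (Equiv.refl M)

omit [AddCommGroup M] in
@[simp]
theorem baseShift_apply (h : H) (x : H × M) : baseShift h x = (x.1 + h, x.2) := rfl

omit [AddCommGroup M] in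
@[simp]
theorem baseShift_inv_apply (h : H) (x : H × M) : (baseShift h)⁻¹ x = (x.1 - h, x.2) := by
  rw [Perm.inv_eq_iff_eq]
  simp

theorem commutatorElement_baseShift_inv_fibreShear (h : H) (χ : H → M) :
    ⁅(baseShift h : Perm (H × M))⁻¹, fibreShear χ⁆ = fibreShear (Δ_[h] χ) := by
  ext x <;>
  simp only [commutatorElement_def, Perm.mul_apply, inv_inv, fibreShear_apply,
    fibreShear_inv_apply, baseShift_apply, baseShift_inv_apply, fwdDiff] <;>
  abel

end Shear

theorem Int.exists_fwdDiff_eq {M : Type*} [AddCommGroup M] (d : ℤ → M) :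
    ∃ χ : ℤ → M, Δ_[1] χ = d := by
  let χ : ℤ → M := fun
    | .ofNat n => ∑ k ∈ Finset.range n, d k
    | .negSucc n => -∑ k ∈ Finset.range (n + 1), d (.negSucc k)
  refine ⟨χ, funext fun i => ?_⟩
  rcases i with n | _ | n
  · show χ (.ofNat (n + 1)) - χ (.ofNat n) = d n
    dsimp only [χ]
    simp [Finset.sum_range_succ]
  · show χ 0 - χ (.negSucc 0) = d (.negSucc 0)
    dsimp only [χ]
    simp
  · show χ (.negSucc n) - χ (.negSucc (n + 1)) = d (.negSucc (n + 1))
    dsimp only [χ]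
    simp [Finset.sum_range_succ (n := n + 1)]

theorem ZMod.eq_zero_or_eq_one (b : ZMod 2) : b = 0 ∨ b = 1 := by
  revert b
  decide

theorem ZMod.eq_add_one_of_ne {a b : ZMod 2} (h : a ≠ b) : a = b + 1 := by
  revert a b
  decide

namespace Equiv.Perm

variable {α β : Type*}

theorem apply_inv_self (f : Perm α) (x : α) : f (f⁻¹ x) = x := f.apply_symm_apply x

theorem viaEmbedding_eq_of_apply {σ : Perm α} {ι : α ↪ β} {f : Perm β}
    (hf : ∀ x, f (ι x) = ι (σ x)) (hfix : ∀ y ∉ range ι, f y = y) : σ.viaEmbedding ι = f := by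
  ext y
  by_cases hy : y ∈ range ι
  · obtain ⟨x, rfl⟩ := hy
    rw [viaEmbedding_apply, hf]
  · rw [viaEmbedding_apply_of_notMem _ _ _ hy, hfix y hy]

theorem viaEmbedding_inv (σ : Perm α) (ι : α ↪ β) :
    σ⁻¹.viaEmbedding ι = (σ.viaEmbedding ι)⁻¹ :=
  map_inv (viaEmbeddingHom ι) σ

theorem mul_viaEmbedding_mul_inv {f : Perm β} {ι κ : α ↪ β} {ρ : Perm α}
    (hf : ∀ x, f (ι x) = κ (ρ x)) (σ : Perm α) :
    f * σ.viaEmbedding ι * f⁻¹ = (ρ * σ * ρ⁻¹).viaEmbedding κ := by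
  have hf_inv : ∀ x, f⁻¹ (κ x) = ι (ρ⁻¹ x) := fun x => by
    rw [inv_eq_iff_eq, hf, apply_inv_self]
  refine (viaEmbedding_eq_of_apply (fun x => ?_) fun y hy => ?_).symm
  · simp only [mul_apply, hf_inv, viaEmbedding_apply, hf]
  · have hy' : f⁻¹ y ∉ range ι := by
      rintro ⟨x, hx⟩
      exact hy ⟨ρ x, by rw [← hf, hx, apply_inv_self]⟩
    rw [mul_apply, mul_apply, viaEmbedding_apply_of_notMem _ _ _ hy', apply_inv_self]

theorem mul_viaEmbedding_mul_inv_of_apply_eq {f : Perm β} {ι κ : α ↪ β}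
    (hf : ∀ x, f (ι x) = κ x) (σ : Perm α) :
    f * σ.viaEmbedding ι * f⁻¹ = σ.viaEmbedding κ := by
  simpa using mul_viaEmbedding_mul_inv (ρ := 1) hf σ

theorem viaEmbedding_commutatorElement {R : Perm β} {ι : α ↪ β} {ρ : Perm α}
    (hR : ∀ x, R (ι x) = ι (ρ x)) (σ : Perm α) :
    ⁅σ, ρ⁆.viaEmbedding ι = ⁅σ.viaEmbedding ι, R⁆ := by
  rw [commutatorElement_def, commutatorElement_def, ← viaEmbedding_inv, mul_assoc _ R,
    mul_assoc _ (R * _), mul_viaEmbedding_mul_inv hR]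
  simp only [← viaEmbeddingHom_apply, ← map_mul, mul_assoc]

theorem exists_fibreShear_of_apply_mem_fibre {H : Type*} {f : Perm β} {u : H × ZMod 2 ↪ β}
    (hf : ∀ i b, ∃ c, f (u (i, b)) = u (i, c)) :
    ∃ T : H → ZMod 2, ∀ x, f (u x) = u (fibreShear T x) := by
  choose c hc using hf
  refine ⟨fun i => c i 0, fun ⟨i, b⟩ => ?_⟩
  have hc1 : c i 1 = c i 0 + 1 := by
    refine ZMod.eq_add_one_of_ne fun h => ?_
    have := f.injective (((hc i 1).trans (by rw [h])).trans (hc i 0).symm)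
    exact one_ne_zero (congrArg Prod.snd (u.injective this))
  rcases ZMod.eq_zero_or_eq_one b with rfl | rfl
  · rw [hc, fibreShear_apply, zero_add]
  · rw [hc, fibreShear_apply, hc1, add_comm]

end Equiv.Perm

section Partition

variable {X : Type*}

theorem exists_embedding_enumerating_pairs [Countable X] {P : Set (Set X)}
    (hdisj : P.PairwiseDisjoint id) (htwo : ∀ S ∈ P, S.encard = 2) (hinf : P.Infinite) :
    ∃ u : ℤ × ZMod 2 ↪ X, ∀ S, S ∈ P ↔ ∃ i, S = u '' {x | x.1 = i} := by
  choose x y hxy hS using fun S : P => Set.encard_eq_two.mp (htwo S S.2)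
  have hx_mem : ∀ S : P, x S ∈ (S : Set X) := fun S => by
    rw [hS S]
    exact mem_insert _ _
  have hy_mem : ∀ S : P, y S ∈ (S : Set X) := fun S => by
    rw [hS S]
    exact mem_insert_of_mem _ rfl
  have hblock : ∀ (S S' : P) {z}, z ∈ (S : Set X) → z ∈ (S' : Set X) → S = S' :=
    fun S S' _ hz hz' => Subtype.ext (hdisj.elim_set S.2 S'.2 _ hz hz')
  have : Countable P := Injective.countable (f := x) fun S S' h =>
    hblock S S' (hx_mem S) (h ▸ hx_mem S')
  have : Infinite P := hinf.to_subtype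
  obtain ⟨φ⟩ : Nonempty (ℤ ≃ P) := nonempty_equiv_of_countable
  let u : ℤ × ZMod 2 → X := fun p => if p.2 = 0 then x (φ p.1) else y (φ p.1)
  have hu_zero : ∀ i, u (i, 0) = x (φ i) := fun i => if_pos rfl
  have hu_one : ∀ i, u (i, 1) = y (φ i) := fun i => if_neg one_ne_zero
  have hu_fibre : ∀ i, u '' {p | p.1 = i} = φ i := fun i => by
    rw [hS (φ i)]
    ext z
    constructor
    · rintro ⟨⟨j, b⟩, rfl : j = i, rfl⟩
      rcases ZMod.eq_zero_or_eq_one b with rfl | rfl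
      · exact Or.inl (hu_zero j)
      · exact Or.inr (hu_one j)
    · rintro (rfl | rfl)
      · exact ⟨(i, 0), rfl, hu_zero i⟩
      · exact ⟨(i, 1), rfl, hu_one i⟩
  have hu_inj : Injective u := by
    rintro ⟨i, b⟩ ⟨j, c⟩ h
    have hmem : ∀ p, u p ∈ (φ p.1 : Set X) := fun p => hu_fibre p.1 ▸ mem_image_of_mem u rfl
    obtain rfl : i = j := φ.injective (hblock _ _ (hmem (i, b)) (h ▸ hmem (j, c)))
    rcases ZMod.eq_zero_or_eq_one b with rfl | rfl <;>
      rcases ZMod.eq_zero_or_eq_one c with rfl | rfl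
    · rfl
    · exact absurd (by rw [← hu_zero, ← hu_one, h]) (hxy (φ i))
    · exact absurd (by rw [← hu_zero, ← hu_one, h]) (hxy (φ i))
    · rfl
  refine ⟨⟨u, hu_inj⟩, fun S => ⟨fun hSP => ⟨φ.symm ⟨S, hSP⟩, ?_⟩, ?_⟩⟩
  · simp only [Embedding.coeFn_mk, hu_fibre, apply_symm_apply]
  · rintro ⟨i, rfl⟩
    simp only [Embedding.coeFn_mk, hu_fibre, Subtype.coe_prop]

theorem exists_perm_apply_eq_of_infinite_compl [Countable X] {I : Type*} (a u : I ↪ X)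
    (ha : (range a)ᶜ.Infinite) (hu : (range u)ᶜ.Infinite) :
    ∃ t : Perm X, ∀ x, t (a x) = u x := by
  classical
  have := ha.to_subtype
  have := hu.to_subtype
  obtain ⟨e⟩ : Nonempty (((range a)ᶜ : Set X) ≃ ((range u)ᶜ : Set X)) :=
    nonempty_equiv_of_countable
  refine ⟨Equiv.subtypeCongr
    ((Equiv.ofInjective a a.injective).symm.trans (Equiv.ofInjective u u.injective)) e,
    fun x => ?_⟩
  simp [Equiv.subtypeCongr]

theorem infinite_compl_of_subset_sUnion_pairs {A₀ : Set (Set X)} (hdisj : A₀.PairwiseDisjoint id)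
    (h1 : {s | s ∈ A₀ ∧ s.encard = 1}.Infinite) {s : Set X}
    (hs : s ⊆ ⋃₀ {S | S ∈ A₀ ∧ S.encard = 2}) : sᶜ.Infinite := by
  have hpoints : {x | {x} ∈ A₀}.Infinite := by
    refine Infinite.of_image (fun x => ({x} : Set X)) (h1.mono ?_)
    rintro S ⟨hS, hS1⟩
    obtain ⟨x, rfl⟩ := encard_eq_one.mp hS1
    exact ⟨x, hS, rfl⟩
  refine hpoints.mono fun x hx hxs => ?_
  obtain ⟨S, ⟨hS, hS2⟩, hxS⟩ := hs hxs
  rw [← hdisj.elim_set hx hS x rfl hxS, encard_singleton] at hS2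
  exact absurd hS2 (by norm_num)

theorem exists_viaEmbedding_fibreShear_eq {A₀ : Set (Set X)} (hcover : ⋃₀ A₀ = univ)
    (h12 : ∀ s ∈ A₀, s.encard = 1 ∨ s.encard = 2) {H : Type*} {u : H × ZMod 2 ↪ X}
    (hu : ∀ S, S ∈ {s | s ∈ A₀ ∧ s.encard = 2} ↔ ∃ i, S = u '' {x | x.1 = i})
    {f : Perm X} (hf : ∀ s ∈ A₀, f '' s = s) :
    ∃ T : H → ZMod 2, (fibreShear T).viaEmbedding u = f := by
  have hfS : ∀ S ∈ A₀, ∀ z ∈ S, f z ∈ S := fun S hS z hz => hf S hS ▸ mem_image_of_mem f hz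
  obtain ⟨T, hT⟩ := Perm.exists_fibreShear_of_apply_mem_fibre (f := f) (u := u) fun i b => by
    obtain ⟨⟨j, c⟩, rfl : j = i, hc⟩ :=
      hfS _ ((hu _).2 ⟨i, rfl⟩).1 _ (mem_image_of_mem u (rfl : (i, b).1 = i))
    exact ⟨c, hc.symm⟩
  refine ⟨T, Perm.viaEmbedding_eq_of_apply hT fun y hy => ?_⟩
  obtain ⟨S, hS, hyS⟩ : y ∈ ⋃₀ A₀ := hcover ▸ mem_univ y
  rcases h12 S hS with hS1 | hS2
  · obtain ⟨z, rfl⟩ := encard_eq_one.mp hS1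
    exact (hfS _ hS y hyS).trans hyS.symm
  · obtain ⟨i, rfl⟩ := (hu S).1 ⟨hS, hS2⟩
    exact absurd (image_subset_range _ _ hyS) hy

theorem exists_perm_conj_viaEmbedding_fibreShear [Countable X] {A₀ : Set (Set X)}
    (hdisj : A₀.PairwiseDisjoint id) (hcover : ⋃₀ A₀ = univ)
    (h1 : {s | s ∈ A₀ ∧ s.encard = 1}.Infinite) (h2 : {s | s ∈ A₀ ∧ s.encard = 2}.Infinite)
    (h12 : ∀ s ∈ A₀, s.encard = 1 ∨ s.encard = 2) (a : ℤ × ZMod 2 ↪ X)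
    (ha : (range a)ᶜ.Infinite) :
    ∃ t : Perm X, ∀ f : Perm X, (∀ s ∈ A₀, f '' s = s) →
      ∃ T : ℤ → ZMod 2, t * (fibreShear T).viaEmbedding a * t⁻¹ = f := by
  obtain ⟨u, hu⟩ := exists_embedding_enumerating_pairs (hdisj.subset fun _ hS => hS.1)
    (fun _ hS => hS.2) h2
  obtain ⟨t, ht⟩ := exists_perm_apply_eq_of_infinite_compl a u ha
    (infinite_compl_of_subset_sUnion_pairs hdisj h1 fun _ ⟨x, hx⟩ =>
      ⟨_, (hu _).2 ⟨x.1, rfl⟩, x, rfl, hx⟩)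
  refine ⟨t, fun f hf => ?_⟩
  obtain ⟨T, rfl⟩ := exists_viaEmbedding_fibreShear_eq hcover h12 hu hf
  exact ⟨T, Perm.mul_viaEmbedding_mul_inv_of_apply_eq ht _⟩

end Partition

section Word

variable {X H : Type*} {a a' : H × ZMod 2 ↪ X}

theorem sq_apply_eq_fibreShear (hdisj : ∀ x y, a x ≠ a' y) {e E g : Perm X}
    (he : ∀ i b, e (a (i, b)) = a (i, b + 1)) (he_fix : ∀ y ∉ range a, e y = y)
    (hE : ∀ i b, E (a (i, b)) = a (i, b + 1)) (hE' : ∀ i b, E (a' (i, b)) = a' (i, b + 1))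
    (χ : H → ZMod 2) (hg0 : ∀ i, g (a (i, 0)) = if χ i = 1 then a' (i, 0) else a (i, 0))
    (hg1 : ∀ i, g (a (i, 1)) = a (i, 1)) (x : H × ZMod 2) :
    ((g⁻¹ * E * g * e) ^ 2) (a x) = a (fibreShear χ x) := by
  obtain ⟨i, b⟩ := x
  have hginv : ∀ {y z}, g y = z → g⁻¹ z = y := fun h => by rw [Perm.inv_eq_iff_eq, h]
  have hg1' : g⁻¹ (a (i, 1)) = a (i, 1) := hginv (hg1 i)
  have h11 : (1 : ZMod 2) + 1 = 0 := rfl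
  simp only [pow_two, Perm.mul_apply, fibreShear_apply]
  rcases ZMod.eq_zero_or_eq_one (χ i) with hχ | hχ
  · have hfix : ∀ c, g (a (i, c)) = a (i, c) := fun c => by
      rcases ZMod.eq_zero_or_eq_one c with rfl | rfl
      · simp [hg0, hχ]
      · exact hg1 i
    simp only [he, hfix, hE, hginv (hfix _), add_assoc, h11, hχ, add_zero]
  -- `a (i, 0) ↦ g⁻¹ (a (i, 0)) ↦ a (i, 1)` and `a (i, 1) ↦ g⁻¹ (a' (i, 1)) ↦ a (i, 0)`,
  -- where the middle points lie off `range a`, so `e` fixes them.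
  have hg0' : g (a (i, 0)) = a' (i, 0) := by simp [hg0, hχ]
  have hA : ∀ y, g (a y) = a y ∨ g (a y) = a' y := fun ⟨j, c⟩ => by
    rcases ZMod.eq_zero_or_eq_one c with rfl | rfl
    · rw [hg0]
      split_ifs <;> simp
    · exact Or.inl (hg1 j)
  have hout₀ : g⁻¹ (a (i, 0)) ∉ range a := by
    rintro ⟨y, hy⟩
    have hgy : g (a y) = a (i, 0) := by rw [hy, Perm.apply_inv_self]
    rcases hA y with h | h <;> rw [h] at hgy
    · obtain rfl := a.injective hgy
      exact hdisj _ _ (h.symm.trans hg0')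
    · exact hdisj _ _ hgy.symm
  have hout₁ : g⁻¹ (a' (i, 1)) ∉ range a := by
    rintro ⟨y, hy⟩
    have hgy : g (a y) = a' (i, 1) := by rw [hy, Perm.apply_inv_self]
    rcases hA y with h | h <;> rw [h] at hgy
    · exact hdisj _ _ hgy
    · obtain rfl := a'.injective hgy
      exact hdisj _ _ ((hg1 i).symm.trans h)
  rw [hχ]
  rcases ZMod.eq_zero_or_eq_one b with rfl | rfl
  · simp only [he, hg1, hE, h11, zero_add, he_fix _ hout₀, Perm.apply_inv_self, hg1']
  · simp only [he, h11, hg0', hE', zero_add, he_fix _ hout₁, Perm.apply_inv_self, hginv hg0']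

theorem exists_mem_apply_eq_fibreShear (hdisj : ∀ x y, a x ≠ a' y) {G K : Subgroup (Perm X)}
    (hG : ∀ γ : H × ZMod 2 → X, (∀ x, γ x = a x ∨ γ x = a' x) → ∃ g ∈ G, ∀ x, γ x = g (a x))
    (hGK : G ≤ K) (he : (fibreShear fun _ => 1).viaEmbedding a ∈ K)
    (he' : (fibreShear fun _ => 1).viaEmbedding a' ∈ K) (χ : H → ZMod 2) :
    ∃ R ∈ K, ∀ x, R (a x) = a (fibreShear χ x) := by
  obtain ⟨g, hgG, hg⟩ := hG (fun x => if x.2 = 0 ∧ χ x.1 = 1 then a' x else a x) fun x => by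
    split_ifs <;> simp
  set e := (fibreShear fun _ => (1 : ZMod 2)).viaEmbedding a
  set e' := (fibreShear fun _ => (1 : ZMod 2)).viaEmbedding a'
  refine ⟨(g⁻¹ * (e * e') * g * e) ^ 2, ?_, sq_apply_eq_fibreShear hdisj (fun i b => ?_)
    (fun y hy => ?_) (fun i b => ?_) (fun i b => ?_) χ (fun i => ?_) (fun i => ?_)⟩
  · have hg : g ∈ K := hGK hgG
    exact pow_mem (mul_mem (mul_mem (mul_mem (inv_mem hg) (mul_mem he he')) hg) he) 2
  · exact Perm.viaEmbedding_apply _ _ (i, b)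
  · exact Perm.viaEmbedding_apply_of_notMem _ _ _ hy
  · rw [Perm.mul_apply, Perm.viaEmbedding_apply_of_notMem _ a' (a (i, b))
      fun ⟨y, hy⟩ => hdisj _ _ hy.symm]
    exact Perm.viaEmbedding_apply _ _ (i, b)
  · rw [Perm.mul_apply, Perm.viaEmbedding_apply, Perm.viaEmbedding_apply_of_notMem _ a _
      fun ⟨y, hy⟩ => hdisj _ _ hy]
    rfl
  · simp [← hg]
  · simp [← hg]

end Word

theorem viaEmbedding_fibreShear_mem {X : Type*} {a a' : ℤ × ZMod 2 ↪ X}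
    (hdisj : ∀ x y, a x ≠ a' y) {G K : Subgroup (Perm X)}
    (hG : ∀ γ : ℤ × ZMod 2 → X, (∀ x, γ x = a x ∨ γ x = a' x) → ∃ g ∈ G, ∀ x, γ x = g (a x))
    (hGK : G ≤ K) (he : (fibreShear fun _ => 1).viaEmbedding a ∈ K)
    (he' : (fibreShear fun _ => 1).viaEmbedding a' ∈ K)
    (hs : (baseShift (1 : ℤ) : Perm (ℤ × ZMod 2)).viaEmbedding a ∈ K) (T : ℤ → ZMod 2) :
    (fibreShear T).viaEmbedding a ∈ K := by
  obtain ⟨χ, rfl⟩ := Int.exists_fwdDiff_eq T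
  obtain ⟨R, hRK, hR⟩ := exists_mem_apply_eq_fibreShear hdisj hG hGK he he' χ
  rw [← commutatorElement_baseShift_inv_fibreShear, Perm.viaEmbedding_commutatorElement hR,
    Perm.viaEmbedding_inv, commutatorElement_def]
  exact mul_mem (mul_mem (mul_mem (inv_mem hs) hRK) (inv_mem (inv_mem hs))) (inv_mem hRK)

theorem stmt12_general {Ω : Type u} [Countable Ω] (G : Subgroup (Equiv.Perm Ω))
    (α β : ℕ → Ω) (hα : Function.Injective α) (hβ : Function.Injective β)
    (hdisj : ∀ i j : ℕ, α i ≠ β j)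
    (h : ∀ γ : ℕ → Ω, (∀ i, γ i = α i ∨ γ i = β i) → ∃ g ∈ G, ∀ i, γ i = g (α i))
    (A₀ : Set (Set Ω)) (hpart : IsPartition A₀)
    (h1 : {s | s ∈ A₀ ∧ s.encard = 1}.Infinite)
    (h2 : {s | s ∈ A₀ ∧ s.encard = 2}.Infinite)
    (h12 : ∀ s ∈ A₀, s.encard = 1 ∨ s.encard = 2) :
    PrecF (SAgrp A₀) G := by
  obtain ⟨-, hblocks, hcover⟩ := hpart
  obtain ⟨ε⟩ : Nonempty (ℤ × ZMod 2 ≃ ℕ) := nonempty_equiv_of_countable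
  let a : ℤ × ZMod 2 ↪ Ω := ε.toEmbedding.trans ⟨α, hα⟩
  let a' : ℤ × ZMod 2 ↪ Ω := ε.toEmbedding.trans ⟨β, hβ⟩
  have hdisj' : ∀ x y, a x ≠ a' y := fun x y => hdisj (ε x) (ε y)
  have hG : ∀ γ : ℤ × ZMod 2 → Ω, (∀ x, γ x = a x ∨ γ x = a' x) → ∃ g ∈ G, ∀ x, γ x = g (a x) :=
    fun γ hγ => by
      obtain ⟨g, hgG, hg⟩ := h (γ ∘ ε.symm) fun k => by simpa [a, a'] using hγ (ε.symm k)
      exact ⟨g, hgG, fun x => by simpa [a] using hg (ε x)⟩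
  obtain ⟨t, ht⟩ := exists_perm_conj_viaEmbedding_fibreShear hblocks hcover h1 h2 h12 a
    ((infinite_range_of_injective a'.injective).mono <| by
      rintro _ ⟨y, rfl⟩ ⟨x, hx⟩
      exact hdisj' x y hx)
  let flip : Perm (ℤ × ZMod 2) := fibreShear fun _ => 1
  let U : Set (Perm Ω) :=
    {flip.viaEmbedding a, flip.viaEmbedding a', (baseShift 1).viaEmbedding a, t}
  refine ⟨U, toFinite U, fun f hf => ?_⟩
  have hU : ∀ x ∈ U, x ∈ Subgroup.closure ((G : Set (Perm Ω)) ∪ U) :=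
    fun x hx => Subgroup.subset_closure (Or.inr hx)
  have htK := hU t (by simp [U])
  obtain ⟨T, rfl⟩ := ht f hf
  exact mul_mem (mul_mem htK (viaEmbedding_fibreShear_mem hdisj' hG
    (fun g hg => Subgroup.subset_closure (Or.inl hg)) (hU _ (by simp [U, flip]))
    (hU _ (by simp [U, flip])) (hU _ (by simp [U])) T)) (inv_mem htK)

/-- Lemma 7.1. -/
theorem stmt12 {Ω : Type u} [Countable Ω] [Infinite Ω] (G : Subgroup (Equiv.Perm Ω))
    (α β : ℕ → Ω) (hα : Function.Injective α) (hβ : Function.Injective β)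
    (hdisj : ∀ i j : ℕ, α i ≠ β j)
    (h : ∀ γ : ℕ → Ω, (∀ i, γ i = α i ∨ γ i = β i) → ∃ g ∈ G, ∀ i, γ i = g (α i))
    (A₀ : Set (Set Ω)) (hpart : IsPartition A₀)
    (h1 : {s | s ∈ A₀ ∧ s.encard = 1}.Infinite)
    (h2 : {s | s ∈ A₀ ∧ s.encard = 2}.Infinite)
    (h12 : ∀ s ∈ A₀, s.encard = 1 ∨ s.encard = 2) :
    PrecF (SAgrp A₀) G :=
  stmt12_general G α β hα hβ hdisj h A₀ hpart h1 h2 h12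
end

section
/- Suppose Ω is a set and G is a subgroup of Sym(Ω) which is discrete in the function topology on Sym(Ω), and which has the property that each element of G moves only finitely many elements of Ω. Then G is finite. -/
open scoped Cardinal ENNReal

universe u

variable {Ω : Type u}

/-!
A neighbourhood of the identity in the function topology contains the pointwise stabilizer of a
finite set, so discreteness gives a finite `I ⊆ Ω` whose pointwise stabilizer in `G` is trivial.
Induct on `I`: for `α ∈ I` the stabilizer `G_α` inherits both hypotheses with `I \ {α}` in place
of `I`, so it is finite, and it remains to see that the orbit of `α` is finite. Fix `g ∈ G` moving
`α`. Whenever `g` fixes `h α`, the conjugate `h⁻¹ g h` lies in `G_α` and moves `h⁻¹ α`, so `h⁻¹ α`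
lies in the finite union `K` of the supports of the elements of `G_α`. The elements sending `α`
into `K` form finitely many cosets of `G_α`, so all but the finitely many points of the orbit
moved by `g` are images of `α` under finitely many elements.
-/

open MulAction Topology

section FiniteSupport

variable {G X : Type*} [Group G] [MulAction G X]

lemma MulAction.finite_setOf_smul_eq {a : X} (ha : (stabilizer G a : Set G).Finite) (x : X) :
    {g : G | g • a = x}.Finite := by
  rcases Set.eq_empty_or_nonempty {g : G | g • a = x} with hempty | ⟨g₀, hg₀⟩
  · rw [hempty]; exact Set.finite_empty
  · refine (ha.image (g₀ * ·)).subset fun g hg => ⟨g₀⁻¹ * g, ?_, mul_inv_cancel_left g₀ g⟩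
    simp_all [mul_smul, inv_smul_eq_iff]

lemma MulAction.finite_orbit_of_finite_stabilizer (hsupp : ∀ g : G, (fixedBy X g)ᶜ.Finite)
    {a : X} (ha : (stabilizer G a : Set G).Finite) : (orbit G a).Finite := by
  by_cases hmove : ∃ g : G, g • a ≠ a
  swap
  · push Not at hmove
    exact (Set.finite_singleton a).subset fun _ ⟨g, hg⟩ => hg ▸ hmove g
  obtain ⟨g, hga⟩ := hmove
  set K := ⋃ t ∈ stabilizer G a, (fixedBy X t)ᶜ
  have hK : K.Finite := ha.biUnion fun t _ => hsupp t
  have hT : {k : G | k • a ∈ K}.Finite := by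
    refine (hK.biUnion fun x _ => finite_setOf_smul_eq ha x).subset fun k hk => ?_
    exact Set.mem_biUnion hk rfl
  refine ((hsupp g).union (hT.image fun k => k⁻¹ • a)).subset ?_
  rintro _ ⟨h, rfl⟩
  by_cases hgh : g • h • a = h • a
  · have hconj : h⁻¹ * g * h ∈ stabilizer G a := by simp [mul_smul, hgh]
    have hmoves : h⁻¹ • a ∈ (fixedBy X (h⁻¹ * g * h))ᶜ := by simpa [mul_smul] using hga
    exact Or.inr ⟨h⁻¹, Set.mem_biUnion hconj hmoves, by simp⟩
  · exact Or.inl hgh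

lemma MulAction.finite_of_finite_stabilizer_of_finite_orbit {a : X}
    (hstab : (stabilizer G a : Set G).Finite) (horbit : (orbit G a).Finite) : Finite G := by
  have := horbit.to_subtype
  have : Finite (G ⧸ stabilizer G a) := .of_equiv _ (orbitEquivQuotientStabilizer G a)
  have : Finite (stabilizer G a) := hstab
  exact .of_equiv _ (Subgroup.groupEquivQuotientProdSubgroup (s := stabilizer G a)).symm

lemma MulAction.finite_of_fixing_finset_eq_one (hsupp : ∀ g : G, (fixedBy X g)ᶜ.Finite)
    (I : Finset X) (hI : ∀ g : G, (∀ a ∈ I, g • a = a) → g = 1) : Finite G := by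
  classical
  induction I using Finset.induction_on generalizing G with
  | empty =>
    have : Subsingleton G := ⟨fun g h => (hI g (by simp)).trans (hI h (by simp)).symm⟩
    infer_instance
  | insert α s _ ih =>
    have hstab : (stabilizer G α : Set G).Finite := Set.finite_coe_iff.mp <|
      ih (fun h => hsupp h) fun h hs =>
        Subtype.ext <| hI h <| Finset.forall_mem_insert _ _ _ |>.2 ⟨h.2, hs⟩
    exact finite_of_finite_stabilizer_of_finite_orbit hstab
      (finite_orbit_of_finite_stabilizer hsupp hstab)

end FiniteSupport

lemma permTop_exists_finset_fixing_subset {s : Set (Equiv.Perm Ω)} (hs : IsOpen[permTop Ω] s)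
    (h1 : 1 ∈ s) : ∃ I : Finset Ω, ∀ g : Equiv.Perm Ω, (∀ a ∈ I, g a = a) → g ∈ s := by
  let _ : TopologicalSpace Ω := ⊥
  obtain ⟨t, ht, rfl⟩ := isOpen_induced_iff.mp hs
  obtain ⟨I, u, hu, hsub⟩ := isOpen_pi_iff.mp ht _ h1
  refine ⟨I, fun g hg => hsub fun a ha => ?_⟩
  change g a ∈ u a
  rw [hg a ha]
  exact (hu a ha).2

lemma FTDiscrete.exists_finset_fixing_eq_one {G : Subgroup (Equiv.Perm Ω)} (hG : FTDiscrete G) :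
    ∃ I : Finset Ω, ∀ g ∈ G, (∀ a ∈ I, g a = a) → g = 1 := by
  let _ : TopologicalSpace (Equiv.Perm Ω) := permTop Ω
  have : DiscreteTopology G := hG
  obtain ⟨s, hs, hpre⟩ := isOpen_induced_iff.mp (isOpen_discrete ({1} : Set G))
  have h1 : (1 : Equiv.Perm Ω) ∈ s := by
    change (1 : G) ∈ Subtype.val ⁻¹' s
    rw [hpre]; rfl
  obtain ⟨I, hI⟩ := permTop_exists_finset_fixing_subset hs h1
  refine ⟨I, fun g hg hfix => ?_⟩
  have : (⟨g, hg⟩ : G) ∈ ({1} : Set G) := hpre ▸ hI g hfix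
  simpa [Subtype.ext_iff] using this

/-- Lemma 11.1: a discrete subgroup of `Sym(Ω)` all of whose
elements move only finitely many points is finite. -/
theorem stmt17 {Ω : Type u} (G : Subgroup (Equiv.Perm Ω)) (hdisc : FTDiscrete G)
    (hfin : ∀ g ∈ G, {x : Ω | g x ≠ x}.Finite) :
    (G : Set (Equiv.Perm Ω)).Finite := by
  obtain ⟨I, hI⟩ := hdisc.exists_finset_fixing_eq_one
  have : Finite G := finite_of_fixing_finset_eq_one (X := Ω) (fun g => hfin g g.2) I
    fun g hg => Subtype.ext (hI g g.2 hg)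
  exact Set.finite_coe_iff.mp this
end

section
/- Let Ω be a countable set, G a closed subgroup of Sym(Ω), and {Σᵢ : i ∈ I} a family of G-invariant subsets of Ω such that each element of G moves only finitely many elements of each Σᵢ, and such that ⋃_{i∈I} Σᵢ = Ω. Then G acts on each Σᵢ as a finite group of permutations; equivalently, G pointwise fixes all but a finite subset of each Σᵢ. -/
open scoped Cardinal ENNReal

universe u

variable {Ω : Type u}

/-!
Write `movedPoints H T` for the points of `T` moved by some element of `H`. Since `G` is
closed and `Ω` is countable, a diagonal argument gives a finite `B` such that the pointwise
stabilizer `G_(B)` moves only finitely many points of `T i`: otherwise one builds elements of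
`G`, each agreeing with the previous one (and its inverse) on a growing finite set, whose limit
lies in `G` and moves infinitely many points of `T i`.

The points of `B` are then removed one at a time. Let `K = G_(B)` and `s ∈ T j`. If the orbit
`sK` is finite, `K` is a finite union of cosets of `K_s`. If it is infinite, any finite subset
of `K` is conjugated into `K_s` by some `c ∈ K` for which `sc` is fixed by all of its
elements, since they move only finitely many points of `T j`. In both cases `K` moves only
finitely many points of `T i` as soon as `K_s` does. Finally, a group moving finitely many
points of an invariant set has finitely many restrictions to it.
-/

section

open Equiv Set Filter

theorem FTClosed.mem_of_eventually_eq {G : Subgroup (Perm Ω)} (hG : FTClosed G)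
    {ι : Type*} {l : Filter ι} [l.NeBot] {g : ι → Perm Ω} (hgG : ∀ n, g n ∈ G) {p : Perm Ω}
    (hp : ∀ ω, ∀ᶠ n in l, g n ω = p ω) : p ∈ G := by
  let _ : TopologicalSpace Ω := ⊥
  have _ : DiscreteTopology Ω := ⟨rfl⟩
  let _ := permTop Ω
  have hlim : Tendsto g l (nhds p) := by
    change Tendsto g l (@nhds _ (TopologicalSpace.induced _ Pi.topologicalSpace) p)
    rw [nhds_induced, tendsto_comap_iff, tendsto_pi_nhds]
    intro ω
    simpa [nhds_discrete] using hp ω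
  exact hG.mem_of_tendsto hlim (Eventually.of_forall hgG)

theorem Equiv.Perm.exists_eventually_eq {ι : Type*} {l : Filter ι} [l.NeBot] {g : ι → Perm Ω}
    (hg : ∀ ω, ∃ a, ∀ᶠ n in l, g n ω = a) (hg' : ∀ ω, ∃ a, ∀ᶠ n in l, (g n)⁻¹ ω = a) :
    ∃ p : Perm Ω, ∀ ω, ∀ᶠ n in l, g n ω = p ω := by
  choose f hf using hg
  choose f' hf' using hg'
  refine ⟨⟨f, f', fun ω => ?_, fun ω => ?_⟩, hf⟩
  · obtain ⟨n, h₁, h₂⟩ := ((hf ω).and (hf' (f ω))).exists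
    rw [← h₂, ← h₁]
    simp
  · obtain ⟨n, h₁, h₂⟩ := ((hf' ω).and (hf (f' ω))).exists
    rw [← h₂, ← h₁]
    simp

theorem exists_eventually_eq_of_eventually_succ_eq {α : Type*} {u : ℕ → α}
    (h : ∀ᶠ n in atTop, u (n + 1) = u n) : ∃ a, ∀ᶠ n in atTop, u n = a := by
  obtain ⟨N, hN⟩ := eventually_atTop.mp h
  refine ⟨u N, eventually_atTop.mpr ⟨N, fun n hn => ?_⟩⟩
  induction n, hn using Nat.le_induction with
  | base => rfl
  | succ n hn ih => rw [hN n hn, ih]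

def movedPoints (H : Subgroup (Perm Ω)) (T : Set Ω) : Set Ω := {x | x ∈ T ∧ ∃ g ∈ H, g x ≠ x}

theorem mem_pstab {G : Subgroup (Perm Ω)} {s : Set Ω} {g : Perm Ω} :
    g ∈ pstab G s ↔ g ∈ G ∧ ∀ x ∈ s, g x = x :=
  Iff.rfl

theorem pstab_empty (G : Subgroup (Perm Ω)) : pstab G ∅ = G := by
  ext; simp [mem_pstab]

theorem pstab_insert (G : Subgroup (Perm Ω)) (s : Ω) (B : Set Ω) :
    pstab G (insert s B) = pstab (pstab G B) {s} := by
  ext; simp [mem_pstab]; tauto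

theorem finite_movedPoints_of_finite_orb {K : Subgroup (Perm Ω)} {s : Ω} {T : Set Ω}
    (hK : ∀ k ∈ K, {x | x ∈ T ∧ k x ≠ x}.Finite) (horb : (orb K s).Finite)
    (hL : (movedPoints (pstab K {s}) T).Finite) : (movedPoints K T).Finite := by
  choose! c hcK hcs using fun y (hy : y ∈ orb K s) => hy
  refine (hL.union (horb.biUnion fun y hy => hK (c y) (hcK y hy))).subset ?_
  rintro x ⟨hxT, k, hkK, hkx⟩
  have hks : k s ∈ orb K s := ⟨k, hkK, rfl⟩
  set l := (c (k s))⁻¹ * k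
  have hl : l ∈ pstab K {s} := by
    refine ⟨K.mul_mem (K.inv_mem (hcK _ hks)) hkK, ?_⟩
    rintro _ rfl
    exact Perm.inv_eq_iff_eq.mpr (hcs _ hks).symm
  by_cases hlx : l x = x
  · refine Or.inr (mem_biUnion hks ⟨hxT, ?_⟩)
    rwa [← Perm.inv_eq_iff_eq.mp hlx]
  · exact Or.inl ⟨hxT, l, hl, hlx⟩

theorem exists_conj_mem_pstab_singleton {K : Subgroup (Perm Ω)} {s : Ω}
    (horb : (orb K s).Infinite) (hK : ∀ k ∈ K, {x | x ∈ orb K s ∧ k x ≠ x}.Finite)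
    {R : Set (Perm Ω)} (hR : R.Finite) (hRK : R ⊆ K) :
    ∃ c ∈ K, ∀ r ∈ R, c⁻¹ * r * c ∈ pstab K {s} := by
  obtain ⟨t, ⟨c, hcK, rfl⟩, hfix⟩ :=
    (horb.sdiff (hR.biUnion fun r hr => hK r (hRK hr))).nonempty
  refine ⟨c, hcK, fun r hr => ⟨K.mul_mem (K.mul_mem (K.inv_mem hcK) (hRK hr)) hcK, ?_⟩⟩
  have hr : r (c s) = c s := by
    by_contra h
    exact hfix (mem_biUnion hr ⟨⟨c, hcK, rfl⟩, h⟩)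
  simp [hr]

theorem finite_movedPoints_of_infinite_orb {K : Subgroup (Perm Ω)} {s : Ω} {T : Set Ω}
    (hT : ∀ k ∈ K, MapsTo k T T) (horb : (orb K s).Infinite)
    (hK : ∀ k ∈ K, {x | x ∈ orb K s ∧ k x ≠ x}.Finite)
    (hL : (movedPoints (pstab K {s}) T).Finite) : (movedPoints K T).Finite := by
  by_contra hinf
  obtain ⟨F, hFsub, hF, hFcard⟩ :=
    Set.Infinite.exists_subset_ncard_eq hinf ((movedPoints (pstab K {s}) T).ncard + 1)
  choose! k hkK hkx using fun x (hx : x ∈ F) => (hFsub hx).2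
  obtain ⟨c, hcK, hc⟩ :=
    exists_conj_mem_pstab_singleton horb hK (hF.image k) (image_subset_iff.2 hkK)
  have hcF : ⇑c⁻¹ '' F ⊆ movedPoints (pstab K {s}) T := by
    rintro _ ⟨x, hx, rfl⟩
    refine ⟨hT _ (K.inv_mem hcK) (hFsub hx).1, _, hc _ (mem_image_of_mem k hx), ?_⟩
    simpa using hkx x hx
  have := ncard_le_ncard hcF hL
  rw [ncard_image_of_injective _ c⁻¹.injective, hFcard] at this
  omega

theorem finite_movedPoints_of_finite_movedPoints_pstab_singleton {K : Subgroup (Perm Ω)}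
    {s : Ω} {T T' : Set Ω} (hT : ∀ k ∈ K, MapsTo k T T)
    (hfinT : ∀ k ∈ K, {x | x ∈ T ∧ k x ≠ x}.Finite) (hs : s ∈ T')
    (hT' : ∀ k ∈ K, MapsTo k T' T') (hfinT' : ∀ k ∈ K, {x | x ∈ T' ∧ k x ≠ x}.Finite)
    (hL : (movedPoints (pstab K {s}) T).Finite) : (movedPoints K T).Finite := by
  rcases (orb K s).finite_or_infinite with horb | horb
  · exact finite_movedPoints_of_finite_orb hfinT horb hL
  · have horbT' : orb K s ⊆ T' := by
      rintro _ ⟨k, hk, rfl⟩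
      exact hT' k hk hs
    refine finite_movedPoints_of_infinite_orb hT horb (fun k hk => ?_) hL
    exact (hfinT' k hk).subset fun x hx => ⟨horbT' hx.1, hx.2⟩

theorem finite_movedPoints_of_finite_movedPoints_pstab {I : Type*}
    {G : Subgroup (Perm Ω)} {T : I → Set Ω} (hT : ∀ i, ∀ g ∈ G, MapsTo g (T i) (T i))
    (hfin : ∀ g ∈ G, ∀ i, {x | x ∈ T i ∧ g x ≠ x}.Finite) (hcover : ⋃ i, T i = univ)
    (i : I) {B : Set Ω} (hB : B.Finite) (hBi : (movedPoints (pstab G B) (T i)).Finite) :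
    (movedPoints G (T i)).Finite := by
  induction B, hB using Set.Finite.induction_on with
  | empty => rwa [pstab_empty] at hBi
  | @insert s B _ _ ih =>
    obtain ⟨j, hsj⟩ := mem_iUnion.mp (hcover ▸ mem_univ s)
    have hle : pstab G B ≤ G := fun g hg => hg.1
    rw [pstab_insert] at hBi
    exact ih (finite_movedPoints_of_finite_movedPoints_pstab_singleton
      (fun k hk => hT i k (hle hk)) (fun k hk => hfin k (hle hk) i) hsj
      (fun k hk => hT j k (hle hk)) (fun k hk => hfin k (hle hk) j) hBi)

theorem finite_restrictions_of_finite_movedPoints {H : Subgroup (Perm Ω)} {T : Set Ω}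
    (hT : ∀ g ∈ H, MapsTo g T T) (hM : (movedPoints H T).Finite) :
    {f : T → Ω | ∃ g ∈ H, ∀ x : T, f x = g x}.Finite := by
  classical
  set M := movedPoints H T
  have := hM.to_subtype
  have hmaps : ∀ g ∈ H, MapsTo g M M := by
    rintro g hg x ⟨hxT, hx⟩
    refine ⟨hT g hg hxT, ?_⟩
    by_cases hgx : g x = x
    · rwa [hgx]
    · exact ⟨g⁻¹, H.inv_mem hg, by simpa [eq_comm] using hgx⟩
  refine (finite_range fun (u : M → M) (x : T) =>
    if hx : (x : Ω) ∈ M then (u ⟨x, hx⟩ : Ω) else x).subset ?_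
  rintro f ⟨g, hg, hf⟩
  refine ⟨(hmaps g hg).restrict, funext fun x => ?_⟩
  rw [hf]
  by_cases hx : (x : Ω) ∈ M
  · simp [hx]
  · simp only [hx, dite_false]
    by_contra h
    exact hx ⟨x.2, g, hg, Ne.symm h⟩

theorem exists_mem_pstab_mul_apply_ne {G : Subgroup (Perm Ω)} {T : Set Ω}
    (hfin : ∀ g ∈ G, {x | x ∈ T ∧ g x ≠ x}.Finite)
    (hinf : ∀ S : Set Ω, S.Finite → (movedPoints (pstab G S) T).Infinite)
    {g : Perm Ω} (hg : g ∈ G) {S : Set Ω} (hS : S.Finite) :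
    ∃ h ∈ pstab G S, ∃ x ∈ T, x ∉ S ∧ (g * h) x ≠ x := by
  obtain ⟨x, ⟨hxT, h, hh, hhx⟩, hxS⟩ := ((hinf S hS).sdiff (hS.union (hfin g hg))).nonempty
  have hgx : g x = x := by
    by_contra hgx
    exact hxS (Or.inr ⟨hxT, hgx⟩)
  refine ⟨h, hh, x, hxT, fun hx => hxS (Or.inl hx), fun hghx => hhx ?_⟩
  exact g.injective (hghx.trans hgx.symm)

theorem FTClosed.exists_mem_infinite_moved_of_seq {G : Subgroup (Perm Ω)} (hG : FTClosed G)
    {T : Set Ω} {g : ℕ → Perm Ω} (hgG : ∀ n, g n ∈ G)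
    (hstable : ∀ ω, ∀ᶠ n in atTop, g (n + 1) ω = g n ω ∧ (g (n + 1))⁻¹ ω = (g n)⁻¹ ω)
    {X : ℕ → Finset Ω} (hmono : Monotone X) (hX : ∀ n, ↑(X n) ⊆ {y | y ∈ T ∧ g n y ≠ y})
    (hcard : ∀ n, (X n).card = n) :
    ∃ p ∈ G, {x | x ∈ T ∧ p x ≠ x}.Infinite := by
  obtain ⟨p, hp⟩ := Perm.exists_eventually_eq
    (fun ω => exists_eventually_eq_of_eventually_succ_eq ((hstable ω).mono fun _ h => h.1))
    (fun ω => exists_eventually_eq_of_eventually_succ_eq ((hstable ω).mono fun _ h => h.2))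
  refine ⟨p, hG.mem_of_eventually_eq hgG hp, fun hfin => ?_⟩
  have hXp : ∀ n, ↑(X n) ⊆ {y | y ∈ T ∧ p y ≠ y} := by
    intro n y hy
    obtain ⟨m, hm, hpm⟩ := ((eventually_ge_atTop n).and (hp y)).exists
    obtain ⟨hyT, hym⟩ := hX m (hmono hm hy)
    exact ⟨hyT, hpm ▸ hym⟩
  set N := {y | y ∈ T ∧ p y ≠ y}.ncard
  have hle := ncard_le_ncard (hXp (N + 1)) hfin
  rw [ncard_coe_finset, hcard] at hle
  omega

theorem exists_finite_movedPoints_pstab [Countable Ω] {G : Subgroup (Perm Ω)} (hG : FTClosed G)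
    {T : Set Ω} (hfin : ∀ g ∈ G, {x | x ∈ T ∧ g x ≠ x}.Finite) :
    ∃ B : Set Ω, B.Finite ∧ (movedPoints (pstab G B) T).Finite := by
  classical
  by_contra! hinf
  obtain ⟨enc, henc⟩ := Countable.exists_injective_nat Ω
  let E : ℕ → Set Ω := fun n => {ω | enc ω < n}
  have hE : ∀ n, (E n).Finite := fun n => (finite_lt_nat n).preimage henc.injOn
  -- Fixing `X` keeps the points moved so far moved; fixing `E n ∪ g⁻¹ '' E n` makes the
  -- sequence and its inverses stabilise pointwise.
  let S : G → Finset Ω → ℕ → Set Ω := fun g X n => ↑X ∪ E n ∪ ⇑(g : Perm Ω)⁻¹ '' E n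
  choose h hh x hxT hxS hx using fun (g : G) X n => exists_mem_pstab_mul_apply_ne hfin hinf g.2
    (S := S g X n) ((X.finite_toSet.union (hE n)).union ((hE n).image _))
  let next : ℕ → G × Finset Ω → G × Finset Ω := fun n p =>
    (⟨p.1 * h p.1 p.2 n, G.mul_mem p.1.2 (hh p.1 p.2 n).1⟩, insert (x p.1 p.2 n) p.2)
  let seq : ℕ → G × Finset Ω := fun n => Nat.rec (1, ∅) next n
  let g : ℕ → Perm Ω := fun n => (seq n).1
  let X : ℕ → Finset Ω := fun n => (seq n).2
  have hfix : ∀ n, ∀ ω ∈ S (seq n).1 (X n) n, g (n + 1) ω = g n ω := fun n ω hω => by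
    change g n (h _ _ n ω) = g n ω
    rw [(hh _ _ n).2 ω hω]
  have hX : ∀ n, ↑(X n) ⊆ {y | y ∈ T ∧ g n y ≠ y} ∧ (X n).card = n := by
    intro n
    induction n with
    | zero => simp [X, seq]
    | succ n ih =>
      have hxX : x (seq n).1 (X n) n ∉ X n := fun h' => hxS _ _ n (Or.inl (Or.inl h'))
      refine ⟨?_, (Finset.card_insert_of_notMem hxX).trans (by rw [ih.2])⟩
      intro y hy
      rcases Finset.mem_insert.mp hy with rfl | hy
      · exact ⟨hxT _ _ n, hx _ _ n⟩
      · rw [mem_ofPred_eq, hfix n y (Or.inl (Or.inl hy))]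
        exact ih.1 hy
  have hstable : ∀ ω, ∀ᶠ n in atTop, g (n + 1) ω = g n ω ∧ (g (n + 1))⁻¹ ω = (g n)⁻¹ ω := by
    intro ω
    filter_upwards [eventually_gt_atTop (enc ω)] with n hn
    refine ⟨hfix n ω (Or.inl (Or.inr hn)), ?_⟩
    rw [Perm.inv_eq_iff_eq, hfix n _ (Or.inr ⟨ω, hn, rfl⟩)]
    exact ((g n).apply_symm_apply ω).symm
  obtain ⟨p, hpG, hp⟩ := hG.exists_mem_infinite_moved_of_seq (fun n => (seq n).1.2) hstable
    (monotone_nat_of_le_succ fun n => Finset.subset_insert _ _) (fun n => (hX n).1)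
    (fun n => (hX n).2)
  exact hp (hfin p hpG)

end

/-- Theorem 11.4, Hjorth. -/
theorem stmt19 {Ω : Type u} [Countable Ω] {I : Type*} (G : Subgroup (Equiv.Perm Ω))
    (hG : FTClosed G) (T : I → Set Ω)
    (hinv : ∀ i : I, ∀ g ∈ G, (g : Ω → Ω) '' T i = T i)
    (hfin : ∀ g ∈ G, ∀ i : I, {x | x ∈ T i ∧ g x ≠ x}.Finite)
    (hcover : (⋃ i : I, T i) = Set.univ) :
    ∀ i : I,
      {f : T i → Ω | ∃ g ∈ G, ∀ x : T i, f x = g (x : Ω)}.Finite ∧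
      {x | x ∈ T i ∧ ∃ g ∈ G, g x ≠ x}.Finite := by
  intro i
  have hmaps : ∀ j, ∀ g ∈ G, Set.MapsTo g (T j) (T j) := fun j g hg =>
    Set.mapsTo_iff_image_subset.mpr (hinv j g hg).subset
  obtain ⟨B, hB, hBi⟩ := exists_finite_movedPoints_pstab hG fun g hg => hfin g hg i
  have hM := finite_movedPoints_of_finite_movedPoints_pstab hmaps hfin hcover i hB hBi
  exact ⟨finite_restrictions_of_finite_movedPoints (hmaps i) hM, hM⟩
end
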